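/- arXiv:1908.10805 — 3 statements merged into one kernel-verified Lean document; each statement's English description precedes it below -/
import Mathlib

section
/- The function ψ : ℕ → ℕ defined by ψ(n) = max over all x with 2^n ≤ x < 2^{n+1} of the least k such that Code.evaln k (Code.ofNatCode (K x)) 0 = some x (the runtime of the shortest program for x) is not computable. -/
/-!
If `ψ` were computable, then `x ↦ T 0 + ∑_{i ≤ x} ψ i` would be a computable bound on the running
time of the shortest program for `x`. Running every program for that many steps and taking the
least one that outputs `x` would then compute `K`. But `K` is not computable (Berry's paradox):
by the recursion theorem there is a program `e` printing the least `x` with `e < K x`, so that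
`K x ≤ e < K x`.
-/

open scoped Classical
open Nat.Partrec Nat.Partrec.Code

theorem K_exists (x : ℕ) : ∃ e : ℕ, (Code.ofNatCode e).eval 0 = Part.some x :=
  ⟨Code.encodeCode (Code.const x), by
    rw [← Code.encodeCode_eq, ← Code.ofNatCode_eq, Denumerable.ofNat_encode]
    exact Code.eval_const x 0⟩

/-- Kolmogorov complexity: the least index `e` such that program `e` on input `0` outputs `x`. -/
noncomputable def K (x : ℕ) : ℕ := Nat.find (K_exists x)

theorem T_exists (x : ℕ) : ∃ k : ℕ, Code.evaln k (Code.ofNatCode (K x)) 0 = some x := by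
  have h : x ∈ (Code.ofNatCode (K x)).eval 0 := by
    have := Nat.find_spec (K_exists x)
    rw [show K x = Nat.find (K_exists x) from rfl, this]
    exact Part.mem_some x
  obtain ⟨k, hk⟩ := Code.evaln_complete.mp h
  exact ⟨k, hk⟩

/-- The running time of the shortest program for `x`. -/
noncomputable def T (x : ℕ) : ℕ := Nat.find (T_exists x)

/-- `ψ n` : the maximal running time of a shortest program, over strings of length `n`. -/
noncomputable def ψ (n : ℕ) : ℕ := (Finset.Ico (2 ^ n) (2 ^ (n + 1))).sup T

theorem Computable.sum_range {f : ℕ → ℕ} (hf : Computable f) :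
    Computable fun n => ∑ i ∈ Finset.range n, f i :=
  (Computable.nat_rec Computable.id (Computable.const 0)
    (Primrec.nat_add.to_comp.comp (Computable.snd.comp Computable.snd)
      (hf.comp (Computable.fst.comp Computable.snd))).to₂).of_eq fun n => by
    induction n with
    | zero => rfl
    | succ n ih => rw [Finset.sum_range_succ, ← ih]; rfl

theorem eval_ofNatCode_K (x : ℕ) : (ofNatCode (K x)).eval 0 = Part.some x :=
  Nat.find_spec (K_exists x)

theorem K_le_of_eval {x e : ℕ} (h : (ofNatCode e).eval 0 = Part.some x) : K x ≤ e :=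
  Nat.find_min' (K_exists x) h

theorem K_injective : Function.Injective K := fun x y hxy =>
  Part.some_inj.mp <| (eval_ofNatCode_K x).symm.trans (hxy ▸ eval_ofNatCode_K y)

theorem exists_lt_K (e : ℕ) : ∃ x, e < K x := by
  obtain ⟨_, ⟨x, rfl⟩, hx⟩ := (Set.infinite_range_of_injective K_injective).exists_gt e
  exact ⟨x, hx⟩

theorem not_computable_K : ¬ Computable K := by
  intro hK
  have hberry : Computable fun e => Nat.find (exists_lt_K e) :=
    Computable.find (P := fun e x => e < K x) ⟨inferInstance,
      Primrec.nat_lt.decide.to_comp.comp Computable.fst (hK.comp Computable.snd)⟩ exists_lt_K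
  obtain ⟨c, hc⟩ := fixed_point
    (Code.primrec_const.to_comp.comp (hberry.comp Computable.encode))
  have hprints : (ofNatCode (Encodable.encode c)).eval 0
      = Part.some (Nat.find (exists_lt_K (Encodable.encode c))) := by
    rw [← ofNatCode_eq, Denumerable.ofNat_encode, ← hc, eval_const]
  exact (K_le_of_eval hprints).not_gt (Nat.find_spec (exists_lt_K _))

theorem evaln_K_of_T_le {x b : ℕ} (h : T x ≤ b) : evaln b (ofNatCode (K x)) 0 = some x :=
  evaln_mono h (Nat.find_spec (T_exists x))

theorem computable_K_of_T_le {B : ℕ → ℕ} (hB : Computable B) (hTB : ∀ x, T x ≤ B x) :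
    Computable K := by
  have hsearch : ∀ x, ∃ e, evaln (B x) (ofNatCode e) 0 = some x :=
    fun x => ⟨K x, evaln_K_of_T_le (hTB x)⟩
  have hK : ∀ x, Nat.find (hsearch x) = K x := fun x =>
    le_antisymm (Nat.find_min' _ (evaln_K_of_T_le (hTB x)))
      (K_le_of_eval (Part.eq_some_iff.mpr (evaln_sound (Nat.find_spec (hsearch x)))))
  have hevaln : Computable fun p : ℕ × ℕ => evaln (B p.1) (ofNatCode p.2) 0 :=
    (primrec_evaln.to_comp.comp (((hB.comp Computable.fst).pair
      ((Computable.ofNat Code).comp Computable.snd)).pair (Computable.const 0))).of_eq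
      fun p => by simp [ofNatCode_eq]
  exact (Computable.find (P := fun x e => evaln (B x) (ofNatCode e) 0 = some x)
    ⟨inferInstance, Primrec.eq.decide.to_comp.comp hevaln
    (Computable.option_some.comp Computable.fst)⟩ hsearch).of_eq hK

theorem T_le_psi_log {x : ℕ} (hx : x ≠ 0) : T x ≤ ψ (Nat.log 2 x) :=
  Finset.le_sup <| Finset.mem_Ico.mpr
    ⟨Nat.pow_log_le_self 2 hx, Nat.lt_pow_succ_log_self one_lt_two x⟩

theorem T_le_add_sum_psi (x : ℕ) : T x ≤ T 0 + ∑ i ∈ Finset.range (x + 1), ψ i := by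
  rcases eq_or_ne x 0 with rfl | hx
  · exact Nat.le_add_right _ _
  calc T x ≤ ψ (Nat.log 2 x) := T_le_psi_log hx
    _ ≤ ∑ i ∈ Finset.range (x + 1), ψ i :=
      Finset.single_le_sum (fun _ _ => Nat.zero_le _)
        (Finset.mem_range.mpr (Nat.lt_succ_of_le (Nat.log_le_self 2 x)))
    _ ≤ _ := Nat.le_add_left _ _

theorem psi_not_computable : ¬ Computable ψ := fun hψ =>
  not_computable_K <| computable_K_of_T_le
    (Primrec.nat_add.to_comp.comp (Computable.const (T 0))
      (hψ.sum_range.comp Primrec.succ.to_comp))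
    T_le_add_sum_psi
end

section
/- Define β(n) = max over all x with 2^n ≤ x < 2^{n+1} of Code.encodeCode (Code.const x), and f(n) = max over all x with 2^n ≤ x < 2^{n+1} and all b ≤ β(n) of ld_b(x) - ld_{b+1}(x) (truncated subtraction on ℕ). Then f grows faster than any computable function: for every computable g : ℕ → ℕ there exist infinitely many n with f(n) > g(n). -/
open scoped Classical
open Nat.Partrec Nat.Partrec.Code

theorem ld_exists (b x : ℕ) :
    ∃ k : ℕ, ∃ c : Code, Code.encodeCode c ≤ K x + b ∧ Code.evaln k c 0 = some x := by
  obtain ⟨k, hk⟩ := T_exists x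
  refine ⟨k, Code.ofNatCode (K x), ?_, hk⟩
  rw [← Code.encodeCode_eq, ← Code.ofNatCode_eq, Denumerable.encode_ofNat]
  exact Nat.le_add_right _ _

/-- The logical depth of `x` at significance level `b`. -/
noncomputable def ld (b x : ℕ) : ℕ := Nat.find (ld_exists b x)

/-- `β n` : the maximal index of `Code.const x` over strings `x` of length `n`. -/
noncomputable def β (n : ℕ) : ℕ :=
  (Finset.Ico (2 ^ n) (2 ^ (n + 1))).sup fun x => Code.encodeCode (Code.const x)

/-- `f n` : the maximal decrease in logical depth for strings of length `n`. -/
noncomputable def f (n : ℕ) : ℕ :=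
  (Finset.Ico (2 ^ n) (2 ^ (n + 1))).sup fun x =>
    (Finset.range (β n + 1)).sup fun b => ld b x - ld (b + 1) x


/-!
If `f n ≤ g n` for all large `n`, the depth drops `ld b x - ld (b + 1) x` for `b ≤ β n` add up
to at most `β n * g n`, and `ld (β n) x < 2 ^ (n + 1)` is witnessed by `Code.const x`; hence every
string `x` of length `n` is printed by a program of index at most `K x` within
`H n = 2 ^ (n + 1) + β n * g n` steps. By counting, some string of length `n` is not printed within
`H n` steps by any of the `2 ^ n - 1` programs of smaller index, and the least such string is
computable from `n`. By the recursion theorem some program `e` prints it for `n = e + N + 1`,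
so its complexity is at most `e < 2 ^ n - 1`: a contradiction.
-/

namespace Nat.Partrec.Code

theorem ofNatCode_encodeCode (c : Code) : ofNatCode (encodeCode c) = c := by
  rw [← encodeCode_eq, ← ofNatCode_eq, Denumerable.ofNat_encode]

theorem primrec_encodeCode : Primrec encodeCode := encodeCode_eq ▸ Primrec.encode

theorem primrec_ofNatCode : Primrec ofNatCode := ofNatCode_eq ▸ Primrec.ofNat Code

theorem evaln_const {k n : ℕ} (hn : n < k) :
    ∀ {x : ℕ}, x < k → evaln k (Code.const x) n = some x
  | 0, _ => by
    obtain ⟨k, rfl⟩ := Nat.exists_eq_add_one_of_ne_zero (Nat.ne_zero_of_lt hn)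
    simp [evaln, Code.const, Nat.le_of_lt_succ hn]
  | x + 1, hx => by
    obtain ⟨k, rfl⟩ := Nat.exists_eq_add_one_of_ne_zero (Nat.ne_zero_of_lt hn)
    have hxk : x ≤ k := by omega
    simp [evaln, Code.const, evaln_const hn (Nat.lt_of_succ_lt hx), Nat.le_of_lt_succ hn, hxk]

theorem encodeCode_const_strictMono : StrictMono fun x => encodeCode (Code.const x) := by
  refine strictMono_nat_of_lt_succ fun x => ?_
  have := Nat.right_le_pair 1 (encodeCode (Code.const x))
  change encodeCode (Code.const x) < encodeCode (comp succ (Code.const x))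
  simp only [encodeCode]
  omega

theorem exists_eval_zero_eq_apply_encodeCode {F : ℕ → ℕ} (hF : Computable F) :
    ∃ c : Code, c.eval 0 = Part.some (F (encodeCode c)) := by
  obtain ⟨c, hc⟩ := fixed_point (f := fun c => Code.const (F (encodeCode c)))
    (primrec_const.to_comp.comp (hF.comp primrec_encodeCode.to_comp))
  exact ⟨c, by rw [← hc, eval_const]⟩

end Nat.Partrec.Code

theorem primrec_two_pow : Primrec fun n : ℕ => 2 ^ n :=
  (Primrec₂.unpaired'.1 Nat.Primrec.pow).comp (Primrec.const 2) Primrec.id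

theorem exists_mem_Ico_forall_lt_ne_some (p : ℕ → Option ℕ) {m a b : ℕ} (h : m < b - a) :
    ∃ x ∈ Finset.Ico a b, ∀ e < m, p e ≠ some x := by
  set S := (Finset.range m).biUnion fun e => (p e).toFinset
  have hS : S.card < (Finset.Ico a b).card :=
    calc S.card ≤ (Finset.range m).card * 1 :=
          Finset.card_biUnion_le_card_mul _ _ _ fun e _ => by cases p e <;> simp
      _ < (Finset.Ico a b).card := by simpa using h
  obtain ⟨x, hx, hxS⟩ := Finset.exists_mem_notMem_of_card_lt_card hS
  exact ⟨x, hx, fun e he hpe =>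
    hxS (Finset.mem_biUnion.2 ⟨e, Finset.mem_range.2 he, by simp [hpe]⟩)⟩

theorem le_add_mul_of_forall_sub_succ_le {u : ℕ → ℕ} {F : ℕ} :
    ∀ {B : ℕ}, (∀ b < B, u b - u (b + 1) ≤ F) → u 0 ≤ u B + B * F
  | 0, _ => by simp
  | B + 1, h => by
    have ih := le_add_mul_of_forall_sub_succ_le fun b hb => h b (Nat.lt_succ_of_lt hb)
    have := h B B.lt_succ_self
    rw [Nat.succ_mul]
    omega

theorem K_le_encodeCode {x : ℕ} {c : Code} (hc : c.eval 0 = Part.some x) :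
    K x ≤ encodeCode c :=
  Nat.find_min' (K_exists x) (by rwa [ofNatCode_encodeCode])

theorem ld_le {b x k : ℕ} {c : Code} (hc : encodeCode c ≤ K x + b)
    (hk : evaln k c 0 = some x) : ld b x ≤ k :=
  Nat.find_le ⟨c, hc, hk⟩

theorem β_eq (n : ℕ) : β n = encodeCode (Code.const (2 ^ (n + 1) - 1)) := by
  have : 2 ^ n < 2 ^ (n + 1) := Nat.pow_lt_pow_succ one_lt_two
  refine le_antisymm (Finset.sup_le fun x hx => ?_)
    (Finset.le_sup (f := fun x => encodeCode (Code.const x)) ?_)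
  · exact encodeCode_const_strictMono.monotone (by simp at hx; omega)
  · simp; omega

theorem primrec_β : Primrec β :=
  (primrec_encodeCode.comp (primrec_const.comp (Primrec.nat_sub.comp
    (primrec_two_pow.comp Primrec.succ) (Primrec.const 1)))).of_eq fun n => (β_eq n).symm

section Strings

variable {n x : ℕ}

theorem ld_β_le (hx : x ∈ Finset.Ico (2 ^ n) (2 ^ (n + 1))) : ld (β n) x ≤ 2 ^ (n + 1) :=
  ld_le ((Finset.le_sup (f := fun x => encodeCode (Code.const x)) hx).trans le_add_self)
    (evaln_const (Nat.two_pow_pos _) (Finset.mem_Ico.1 hx).2)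

theorem ld_sub_ld_succ_le_f (hx : x ∈ Finset.Ico (2 ^ n) (2 ^ (n + 1))) {b : ℕ}
    (hb : b < β n + 1) : ld b x - ld (b + 1) x ≤ f n :=
  (Finset.le_sup (f := fun b => ld b x - ld (b + 1) x) (Finset.mem_range.2 hb)).trans
    (Finset.le_sup (f := fun x => (Finset.range (β n + 1)).sup fun b => ld b x - ld (b + 1) x) hx)

theorem exists_le_K_evaln_of_f_le {m : ℕ} (hf : f n ≤ m)
    (hx : x ∈ Finset.Ico (2 ^ n) (2 ^ (n + 1))) :
    ∃ e ≤ K x, evaln (2 ^ (n + 1) + β n * m) (ofNatCode e) 0 = some x := by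
  obtain ⟨c, hcK, hc⟩ := Nat.find_spec (ld_exists 0 x)
  have hld : ld 0 x ≤ 2 ^ (n + 1) + β n * m :=
    calc ld 0 x ≤ ld (β n) x + β n * f n :=
          le_add_mul_of_forall_sub_succ_le (u := fun b => ld b x) fun _ hb =>
            ld_sub_ld_succ_le_f hx (Nat.lt_succ_of_lt hb)
      _ ≤ 2 ^ (n + 1) + β n * m := add_le_add (ld_β_le hx) (Nat.mul_le_mul_left _ hf)
  refine ⟨encodeCode c, hcK, ?_⟩
  rw [ofNatCode_encodeCode]
  exact evaln_mono hld hc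

end Strings

def NotPrintedWithin (m H x : ℕ) : Prop := ∀ e < m, evaln H (ofNatCode e) 0 ≠ some x

theorem exists_notPrintedWithin (n H : ℕ) :
    ∃ x ∈ Finset.Ico (2 ^ n) (2 ^ (n + 1)), NotPrintedWithin (2 ^ n - 1) H x := by
  have : 2 ^ (n + 1) = 2 * 2 ^ n := by ring
  have : 1 ≤ 2 ^ n := Nat.one_le_two_pow
  exact exists_mem_Ico_forall_lt_ne_some (fun e => evaln H (ofNatCode e) 0) (by omega)

theorem primrecPred_notPrintedWithin :
    PrimrecPred fun q : (ℕ × ℕ) × ℕ => NotPrintedWithin q.1.1 q.1.2 q.2 := by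
  have hR : PrimrecRel fun (e : ℕ) (q : ℕ × ℕ) => evaln q.1 (ofNatCode e) 0 ≠ some q.2 :=
    (PrimrecRel.comp Primrec.eq (primrec_evaln.comp (((Primrec.fst.comp Primrec.snd).pair
      (primrec_ofNatCode.comp Primrec.fst)).pair (Primrec.const 0)))
      (Primrec.option_some.comp (Primrec.snd.comp Primrec.snd))).not
  exact (hR.forall_mem_list.comp (Primrec.list_range.comp (Primrec.fst.comp Primrec.fst))
    ((Primrec.snd.comp Primrec.fst).pair Primrec.snd)).of_eq fun q => by simp [NotPrintedWithin]

noncomputable def hardString (H : ℕ → ℕ) (n : ℕ) : ℕ :=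
  Nat.find (exists_notPrintedWithin n (H n))

theorem hardString_spec (H : ℕ → ℕ) (n : ℕ) :
    hardString H n ∈ Finset.Ico (2 ^ n) (2 ^ (n + 1)) ∧
      NotPrintedWithin (2 ^ n - 1) (H n) (hardString H n) :=
  Nat.find_spec (exists_notPrintedWithin n (H n))

theorem computable_hardString {H : ℕ → ℕ} (hH : Computable H) :
    Computable (hardString H) := by
  have hpow : Primrec fun q : (ℕ × ℕ) × ℕ => 2 ^ q.1.1 :=
    primrec_two_pow.comp (Primrec.fst.comp Primrec.fst)
  obtain ⟨_, hP⟩ : PrimrecPred fun q : (ℕ × ℕ) × ℕ =>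
      q.2 ∈ Finset.Ico (2 ^ q.1.1) (2 ^ (q.1.1 + 1)) ∧
        NotPrintedWithin (2 ^ q.1.1 - 1) q.1.2 q.2 :=
    ((PrimrecRel.comp Primrec.nat_le hpow Primrec.snd).and
      (PrimrecRel.comp Primrec.nat_lt Primrec.snd
        (primrec_two_pow.comp (Primrec.succ.comp (Primrec.fst.comp Primrec.fst))))).and
      (primrecPred_notPrintedWithin.comp (((Primrec.nat_sub.comp hpow (Primrec.const 1)).pair
        (Primrec.snd.comp Primrec.fst)).pair Primrec.snd)) |>.of_eq fun q => by simp [and_assoc]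
  exact Computable.find ⟨_, hP.to_comp.comp
    ((Computable.fst.pair (hH.comp Computable.fst)).pair Computable.snd)⟩ _

theorem f_grows_faster_than_any_computable :
    ∀ g : ℕ → ℕ, Computable g → ∀ N : ℕ, ∃ n : ℕ, N ≤ n ∧ g n < f n := by
  intro g hg N
  by_contra! hfg
  set H : ℕ → ℕ := fun n => 2 ^ (n + 1) + β n * g n
  have hH : Computable H := Primrec.nat_add.to_comp.comp (primrec_two_pow.comp Primrec.succ).to_comp
    (Primrec.nat_mul.to_comp.comp primrec_β.to_comp hg)
  obtain ⟨c, hc⟩ := exists_eval_zero_eq_apply_encodeCode ((computable_hardString hH).comp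
    (Primrec.nat_add.comp Primrec.id (Primrec.const (N + 1))).to_comp)
  set n := encodeCode c + (N + 1)
  obtain ⟨hx, hhard⟩ := hardString_spec H n
  obtain ⟨e, heK, he⟩ := exists_le_K_evaln_of_f_le (hfg n (by omega)) hx
  have hK : K (hardString H n) ≤ encodeCode c := K_le_encodeCode hc
  have : n < 2 ^ n := Nat.lt_two_pow_self
  exact hhard e (by omega) he
end

section
/- The Busy Beaver function BB grows faster than any computable function: for every computable g : ℕ → ℕ there exist infinitely many m with BB(m) > g(m). -/
/-! If a computable `g` eventually dominated `BB`, then `c ↦ g (max (encode c) N)` would be a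
computable bound on the halting time of every halting code `c` on input `0`, and running `c` for
that many steps would decide the halting problem. -/

open scoped Classical
open Nat.Partrec Nat.Partrec.Code

theorem BB_exists (c : Code) (h : (c.eval 0).Dom) : ∃ k : ℕ, (Code.evaln k c 0).isSome := by
  obtain ⟨k, hk⟩ := Code.evaln_complete.mp (Part.get_mem h)
  exact ⟨k, by rw [hk]; rfl⟩

/-- The Busy Beaver function: the maximal halting time over halting programs of index `≤ m`. -/
noncomputable def BB (m : ℕ) : ℕ :=
  (Finset.range (m + 1)).sup fun e =>
    if h : ((Code.ofNatCode e).eval 0).Dom then Nat.find (BB_exists _ h) else 0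

open Encodable

theorem BB_mono : Monotone BB := fun _ _ hab =>
  Finset.sup_mono (Finset.range_subset_range.2 (Nat.succ_le_succ hab))

theorem find_BB_exists_le_BB (c : Code) (h : (c.eval 0).Dom) :
    Nat.find (BB_exists c h) ≤ BB (encode c) := by
  have hc : Code.ofNatCode (encode c) = c := by
    rw [← Code.ofNatCode_eq, Denumerable.ofNat_encode]
  refine le_trans (le_of_eq ?_) (Finset.le_sup (Finset.self_mem_range_succ (encode c)))
  simp only [hc, h, dite_true]

theorem eval_dom_iff_evaln_isSome_of_BB_le {c : Code} {b : ℕ} (hb : BB (encode c) ≤ b) :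
    (c.eval 0).Dom ↔ (Code.evaln b c 0).isSome := by
  constructor
  · intro h
    obtain ⟨x, hx⟩ := Option.isSome_iff_exists.1 (Nat.find_spec (BB_exists c h))
    rw [Code.evaln_mono ((find_BB_exists_le_BB c h).trans hb) hx]
    rfl
  · intro h
    obtain ⟨x, hx⟩ := Option.isSome_iff_exists.1 h
    exact Part.dom_iff_mem.2 ⟨x, Code.evaln_sound hx⟩

theorem computablePred_eval_dom_of_BB_le {b : Code → ℕ} (hb : Computable b)
    (hBB : ∀ c, BB (encode c) ≤ b c) : ComputablePred fun c : Code => (c.eval 0).Dom := by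
  rw [ComputablePred.computable_iff]
  refine ⟨fun c => (Code.evaln (b c) c 0).isSome, ?_, ?_⟩
  · exact Primrec.option_isSome.to_comp.comp <| Code.primrec_evaln.to_comp.comp <|
      (hb.pair Computable.id).pair (Computable.const 0)
  · funext c
    exact propext (eval_dom_iff_evaln_isSome_of_BB_le (hBB c))

theorem BB_grows_faster_than_any_computable :
    ∀ g : ℕ → ℕ, Computable g → ∀ N : ℕ, ∃ m : ℕ, N ≤ m ∧ g m < BB m := by
  intro g hg N
  by_contra! hdom
  have hbound : Computable fun c : Code => g (max (encode c) N) :=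
    hg.comp (Primrec.nat_max.comp Primrec.encode (Primrec.const N)).to_comp
  exact ComputablePred.halting_problem 0 <| computablePred_eval_dom_of_BB_le hbound fun c =>
    (BB_mono (le_max_left _ N)).trans (hdom _ (le_max_right _ _))
end
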